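/- Let ‖·‖ be a norm on ℝ^d and let f : ℝ^d → ℝ be Lipschitz with respect to ‖·‖ and subdifferentiable at every point. Then f is ρ-weakly convex with respect to ‖·‖ if and only if for all w, v ∈ ℝ^d and every g in the regular subdifferential ∂f(w) it holds that f(v) ≥ f(w) + ⟨g, v − w⟩ − (ρ/2)‖v − w‖². -/

import Mathlib

/-!
A regular subgradient `g` at `w` gives `f (w + t • (v - w)) ≥ f w + t ⟪g, v - w⟫ - o(t)` as
`t → 0⁺`, while weak convexity bounds the left side by the chord plus
`ρ t (1 - t) / 2 · Nm (v - w) ^ 2`; dividing by `t` and letting `t → 0⁺` gives the quadratic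
minorant. Conversely, applying the minorant at `u = λ w + (1 - λ) v` to both `w` and `v` and
averaging with weights `λ, 1 - λ` cancels the linear terms and leaves
`λ (1 - λ)² + (1 - λ) λ² = λ (1 - λ)` in front of `ρ / 2 · Nm (w - v) ^ 2`.
-/

open Set Filter

/-- `Nm` is a norm on `ℝ^d`. -/
def IsNorm {d : ℕ} (Nm : EuclideanSpace ℝ (Fin d) → ℝ) : Prop :=
  (∀ x, Nm x = 0 ↔ x = 0) ∧ (∀ (a : ℝ) (x), Nm (a • x) = |a| * Nm x) ∧
    ∀ x y, Nm (x + y) ≤ Nm x + Nm y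

/-- `f` is `ρ`-weakly convex on `W` w.r.t. the norm `Nm`. -/
def WeaklyConvexOn {d : ℕ} (Nm : EuclideanSpace ℝ (Fin d) → ℝ) (ρ : ℝ)
    (W : Set (EuclideanSpace ℝ (Fin d))) (f : EuclideanSpace ℝ (Fin d) → ℝ) : Prop :=
  ∀ w ∈ W, ∀ v ∈ W, ∀ l : ℝ, 0 ≤ l → l ≤ 1 →
    f (l • w + (1 - l) • v) ≤ l * f w + (1 - l) * f v + ρ * l * (1 - l) / 2 * Nm (w - v) ^ 2

/-- The regular subdifferential of `f` at `w` w.r.t. the norm `Nm`. -/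
noncomputable def RegSubdiff {d : ℕ} (Nm : EuclideanSpace ℝ (Fin d) → ℝ)
    (f : EuclideanSpace ℝ (Fin d) → ℝ) (w : EuclideanSpace ℝ (Fin d)) :
    Set (EuclideanSpace ℝ (Fin d)) :=
  {g | 0 ≤ liminf (fun v => (f v - f w - (inner ℝ g (v - w) : ℝ)) / Nm (v - w))
        (nhdsWithin w {w}ᶜ)}

open Topology

namespace IsNorm

variable {d : ℕ} {Nm : EuclideanSpace ℝ (Fin d) → ℝ}

def toSeminorm (hNm : IsNorm Nm) : Seminorm ℝ (EuclideanSpace ℝ (Fin d)) :=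
  Seminorm.of Nm hNm.2.2 fun a x => by rw [hNm.2.1, Real.norm_eq_abs]

lemma continuous (hNm : IsNorm Nm) : Continuous Nm :=
  continuousOn_univ.1 <| hNm.toSeminorm.convexOn.continuousOn isOpen_univ

lemma nonneg (hNm : IsNorm Nm) (x : EuclideanSpace ℝ (Fin d)) : 0 ≤ Nm x :=
  apply_nonneg hNm.toSeminorm x

lemma pos (hNm : IsNorm Nm) {x : EuclideanSpace ℝ (Fin d)} (hx : x ≠ 0) : 0 < Nm x :=
  (hNm.nonneg x).lt_of_ne' fun h => hx ((hNm.1 x).1 h)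

lemma exists_pos_mul_norm_le (hNm : IsNorm Nm) :
    ∃ c > 0, ∀ x, c * ‖x‖ ≤ Nm x := by
  have hpos : ∀ x ∈ Metric.sphere (0 : EuclideanSpace ℝ (Fin d)) 1, 0 < Nm x := fun x hx =>
    hNm.pos (ne_zero_of_mem_unit_sphere ⟨x, hx⟩)
  obtain ⟨c, hc, hcle⟩ :=
    (isCompact_sphere 0 1).exists_forall_le' hNm.continuous.continuousOn hpos
  refine ⟨c, hc, fun x => ?_⟩
  rcases eq_or_ne x 0 with rfl | hx
  · simpa using hNm.nonneg 0
  have hxn : 0 < ‖x‖ := norm_pos_iff.2 hx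
  have hmem : ‖x‖⁻¹ • x ∈ Metric.sphere (0 : EuclideanSpace ℝ (Fin d)) 1 := by
    simp [norm_smul, hxn.ne']
  have := hcle _ hmem
  rw [hNm.2.1, abs_inv, abs_norm, le_inv_mul_iff₀ hxn] at this
  linarith

end IsNorm

section RegularSubgradient

variable {d : ℕ} {Nm : EuclideanSpace ℝ (Fin d) → ℝ} {f : EuclideanSpace ℝ (Fin d) → ℝ}
  {w : EuclideanSpace ℝ (Fin d)}

/- Without a lower bound, the `liminf` in `RegSubdiff` is the junk value `sSup ∅ = 0`
and every `g` would be a regular subgradient. -/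
lemma IsNorm.isBoundedUnder_ge_slope (hNm : IsNorm Nm) {L₀ : ℝ}
    (hlip : ∀ v w, |f v - f w| ≤ L₀ * Nm (v - w)) (g : EuclideanSpace ℝ (Fin d)) :
    IsBoundedUnder (· ≥ ·) (𝓝[≠] w)
      (fun v => (f v - f w - (inner ℝ g (v - w) : ℝ)) / Nm (v - w)) := by
  obtain ⟨c, hc, hcNm⟩ := hNm.exists_pos_mul_norm_le
  refine isBoundedUnder_of_eventually_ge (a := -(L₀ + ‖g‖ / c)) ?_
  filter_upwards [self_mem_nhdsWithin] with v hv
  have hN : 0 < Nm (v - w) := hNm.pos (sub_ne_zero.2 hv)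
  have hf : -(L₀ * Nm (v - w)) ≤ f v - f w := neg_le_of_abs_le (hlip v w)
  have hg : (inner ℝ g (v - w) : ℝ) ≤ ‖g‖ / c * Nm (v - w) :=
    calc (inner ℝ g (v - w) : ℝ) ≤ ‖g‖ * ‖v - w‖ := real_inner_le_norm g (v - w)
      _ ≤ ‖g‖ * (Nm (v - w) / c) := by
        gcongr; rw [le_div_iff₀ hc, mul_comm]; exact hcNm _
      _ = ‖g‖ / c * Nm (v - w) := by ring
  rw [le_div_iff₀ hN]
  linarith

lemma eventually_lt_of_mem_regSubdiff {g : EuclideanSpace ℝ (Fin d)} (hNm : IsNorm Nm)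
    (hbdd : IsBoundedUnder (· ≥ ·) (𝓝[≠] w)
      (fun v => (f v - f w - (inner ℝ g (v - w) : ℝ)) / Nm (v - w)))
    (hg : g ∈ RegSubdiff Nm f w) {ε : ℝ} (hε : 0 < ε) :
    ∀ᶠ v in 𝓝[≠] w, f w + inner ℝ g (v - w) - ε * Nm (v - w) < f v := by
  filter_upwards [eventually_lt_of_lt_liminf ((neg_neg_of_pos hε).trans_le hg) hbdd,
    self_mem_nhdsWithin] with v hv hvw
  rw [lt_div_iff₀ (hNm.pos (sub_ne_zero.2 hvw))] at hv
  linarith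

end RegularSubgradient

lemma tendsto_add_smul_nhdsGT_nhdsNE {E : Type*} [NormedAddCommGroup E] [NormedSpace ℝ E]
    (w : E) {x : E} (hx : x ≠ 0) :
    Tendsto (fun t : ℝ => w + t • x) (𝓝[>] 0) (𝓝[≠] w) := by
  refine tendsto_nhdsWithin_of_tendsto_nhds_of_eventually_within _ ?_ ?_
  · have hcont : Continuous fun t : ℝ => w + t • x := by fun_prop
    simpa using (hcont.tendsto 0).mono_left nhdsWithin_le_nhds
  · filter_upwards [self_mem_nhdsWithin] with t (ht : 0 < t)
    simp [ht.ne', hx]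

section WeakConvexity

variable {d : ℕ} {Nm : EuclideanSpace ℝ (Fin d) → ℝ} {f : EuclideanSpace ℝ (Fin d) → ℝ}
  {ρ : ℝ}

lemma WeaklyConvexOn.le_of_mem_regSubdiff (hNm : IsNorm Nm) {L₀ : ℝ}
    (hlip : ∀ v w, |f v - f w| ≤ L₀ * Nm (v - w)) (hwc : WeaklyConvexOn Nm ρ univ f)
    {w g : EuclideanSpace ℝ (Fin d)} (hg : g ∈ RegSubdiff Nm f w) (v : EuclideanSpace ℝ (Fin d)) :
    f w + inner ℝ g (v - w) - ρ / 2 * Nm (v - w) ^ 2 ≤ f v := by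
  rcases eq_or_ne v w with rfl | hvw
  · simp [(hNm.1 0).2 rfl]
  set x := v - w
  set N := Nm x
  have hN : 0 < N := hNm.pos (sub_ne_zero.2 hvw)
  have hslack : ∀ ε > 0, inner ℝ g x - ε * N ≤ f v - f w + ρ / 2 * N ^ 2 := by
    intro ε hε
    have hlim : Tendsto (fun t : ℝ => f v - f w + ρ * (1 - t) / 2 * N ^ 2) (𝓝[>] 0)
        (𝓝 (f v - f w + ρ / 2 * N ^ 2)) := by
      have hcont : Continuous fun t : ℝ => f v - f w + ρ * (1 - t) / 2 * N ^ 2 := by fun_prop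
      simpa using (hcont.tendsto 0).mono_left nhdsWithin_le_nhds
    refine ge_of_tendsto hlim ?_
    filter_upwards [(tendsto_add_smul_nhdsGT_nhdsNE w (sub_ne_zero.2 hvw)).eventually
        (eventually_lt_of_mem_regSubdiff hNm (hNm.isBoundedUnder_ge_slope hlip g) hg hε),
      Ioo_mem_nhdsGT one_pos] with t hsub ⟨ht0, ht1⟩
    have hconv := hwc v trivial w trivial t ht0.le ht1.le
    rw [show t • v + (1 - t) • w = w + t • x by module] at hconv
    simp only [add_sub_cancel_left, hNm.2.1, abs_of_pos ht0, real_inner_smul_right] at hsub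
    have hscaled : t * (inner ℝ g x - ε * N) ≤ t * (f v - f w + ρ * (1 - t) / 2 * N ^ 2) := by
      linarith
    exact le_of_mul_le_mul_left hscaled ht0
  refine le_of_forall_pos_le_add fun δ hδ => ?_
  have := hslack (δ / N) (by positivity)
  rw [div_mul_cancel₀ _ hN.ne'] at this
  linarith

lemma weaklyConvexOn_univ_of_forall_exists_minorant (hNm : IsNorm Nm)
    (h : ∀ u, ∃ g, ∀ v, f u + inner ℝ g (v - u) - ρ / 2 * Nm (v - u) ^ 2 ≤ f v) :
    WeaklyConvexOn Nm ρ univ f := by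
  intro w _ v _ l hl0 hl1
  set u := l • w + (1 - l) • v
  obtain ⟨g, hg⟩ := h u
  have hw := hg w
  have hv := hg v
  rw [show w - u = (1 - l) • (w - v) by module, hNm.2.1, real_inner_smul_right,
    abs_of_nonneg (sub_nonneg.2 hl1)] at hw
  rw [show v - u = (-l) • (w - v) by module, hNm.2.1, real_inner_smul_right, abs_neg,
    abs_of_nonneg hl0] at hv
  nlinarith [mul_le_mul_of_nonneg_left hw hl0, mul_le_mul_of_nonneg_left hv (sub_nonneg.2 hl1)]

end WeakConvexity

theorem stmt_8_general (d : ℕ) (Nm : EuclideanSpace ℝ (Fin d) → ℝ) (hNm : IsNorm Nm)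
    (f : EuclideanSpace ℝ (Fin d) → ℝ) (L₀ : ℝ)
    (hlip : ∀ v w, |f v - f w| ≤ L₀ * Nm (v - w))
    (hsub : ∀ w, (RegSubdiff Nm f w).Nonempty) (ρ : ℝ) :
    WeaklyConvexOn Nm ρ univ f ↔
      ∀ w v : EuclideanSpace ℝ (Fin d), ∀ g ∈ RegSubdiff Nm f w,
        f v ≥ f w + (inner ℝ g (v - w) : ℝ) - ρ / 2 * Nm (v - w) ^ 2 :=
  ⟨fun hwc _ v _ hg => hwc.le_of_mem_regSubdiff hNm hlip hg v,
    fun h => weaklyConvexOn_univ_of_forall_exists_minorant hNm fun u =>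
      (hsub u).imp fun g hg v => h u v g hg⟩

/-- A Lipschitz, everywhere-subdifferentiable `f` is `ρ`-weakly convex iff for all `w, v`
and every `g ∈ ∂f(w)`, `f(v) ≥ f(w) + ⟨g, v − w⟩ − (ρ/2)‖v − w‖²`. -/
theorem stmt_8 (d : ℕ) (Nm : EuclideanSpace ℝ (Fin d) → ℝ) (hNm : IsNorm Nm)
    (f : EuclideanSpace ℝ (Fin d) → ℝ) (L₀ : ℝ)
    (hlip : ∀ v w, |f v - f w| ≤ L₀ * Nm (v - w))
    (hsub : ∀ w, (RegSubdiff Nm f w).Nonempty) (ρ : ℝ) (hρ : 0 ≤ ρ) :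
    WeaklyConvexOn Nm ρ univ f ↔
      ∀ w v : EuclideanSpace ℝ (Fin d), ∀ g ∈ RegSubdiff Nm f w,
        f v ≥ f w + (inner ℝ g (v - w) : ℝ) - ρ / 2 * Nm (v - w) ^ 2 :=
  stmt_8_general d Nm hNm f L₀ hlip hsub ρ
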